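/- Let A be the 0-1 matrix over the positive integers defined by A(i,j) = 1 if and only if i = 1 or j ∈ {i−1, i, i+2, i+3, i+5, i+6}. Then (a) every column set ρ_A^{-1}(j) = {i : A(i,j) = 1} has at most 7 elements, and there exists j for which it has exactly 7 elements (so M_A = 7); and (b) any two distinct elements of {2,3,4,5,6,7,8,9} belong to a common column set ρ_A^{-1}(k) for some positive integer k, and consequently every A-orthogonal division of the positive integers has at least 8 parts. -/

import Mathlib

/-!
Column `k` of `exMat` consists of `1` together with the `i` for which `k - i` lies in the
offset set `D = {-1, 0, 2, 3, 5, 6}`, so it has at most `1 + |D| = 7` elements. Every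
`d ∈ {1, …, 7}` is a difference of two elements of `D`, so any two positive integers at
distance at most `7` share a column. The eight integers `2, …, 9` therefore pairwise share
a column, and no part of an orthogonal division can contain two of them.
-/

/-- An `A`-orthogonal division: a partition of the positive integers into `m` parts
`H 0, …, H (m-1)` such that `|ρ_A^{-1}(k) ∩ H l| ≤ 1` for every `k` and every part `l`,
where `ρ_A^{-1}(k) = {j : A(j,k) = 1}`. -/
def IsOrthDiv (A : ℕ+ → ℕ+ → Bool) (m : ℕ) (H : Fin m → Set ℕ+) : Prop :=
  (∀ x : ℕ+, ∃! l : Fin m, x ∈ H l) ∧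
  ∀ (k : ℕ+) (l : Fin m), ({j : ℕ+ | A j k = true} ∩ H l).encard ≤ 1

/-- The matrix of Example: `A(i,j) = 1` iff `i = 1` or `j ∈ {i−1, i, i+2, i+3, i+5, i+6}`. -/
def exMat (i j : ℕ+) : Bool :=
  decide (i = 1 ∨ (j : ℕ) + 1 = (i : ℕ) ∨ j = i ∨ (j : ℕ) = (i : ℕ) + 2 ∨
    (j : ℕ) = (i : ℕ) + 3 ∨ (j : ℕ) = (i : ℕ) + 5 ∨ (j : ℕ) = (i : ℕ) + 6)

theorem IsOrthDiv.card_le_of_pairwise {A : ℕ+ → ℕ+ → Bool} {m : ℕ} {H : Fin m → Set ℕ+}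
    (hH : IsOrthDiv A m H) (s : Finset ℕ+)
    (hs : (s : Set ℕ+).Pairwise fun a b => ∃ k, A a k = true ∧ A b k = true) :
    s.card ≤ m := by
  choose part hpart using fun x => (hH.1 x).exists
  have hinj : Set.InjOn part s := by
    intro a ha b hb hab
    by_contra hne
    obtain ⟨k, hak, hbk⟩ := hs ha hb hne
    exact hne <| Set.encard_le_one_iff.mp (hH.2 k (part a)) a b ⟨hak, hpart a⟩
      ⟨hbk, hab ▸ hpart b⟩
  simpa using Finset.card_le_card_of_injOn part (fun _ _ => Finset.mem_univ _) hinj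

theorem encard_setOf_sub_mem_le (k : ℤ) (D : Finset ℤ) :
    {i : ℕ+ | k - i ∈ D}.encard ≤ D.card := by
  rw [← Set.encard_coe_eq_coe_finsetCard]
  refine Set.encard_le_encard_of_injOn (f := fun i : ℕ+ => k - i) (fun _ hi => hi) ?_
  intro a _ b _ hab
  exact PNat.coe_injective (by simpa using hab)

def exOffsets : Finset ℤ := {-1, 0, 2, 3, 5, 6}

theorem exMat_eq_true_iff {i k : ℕ+} : exMat i k = true ↔ i = 1 ∨ (k : ℤ) - i ∈ exOffsets := by
  simp only [exMat, exOffsets, decide_eq_true_eq, Finset.mem_insert, Finset.mem_singleton,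
    ← PNat.coe_inj]
  omega

theorem encard_exMat_column_le (k : ℕ+) : {i : ℕ+ | exMat i k = true}.encard ≤ 7 :=
  calc {i : ℕ+ | exMat i k = true}.encard
      = (insert 1 {i : ℕ+ | (k : ℤ) - i ∈ exOffsets}).encard := by
        simp only [exMat_eq_true_iff, Set.insert_def, Set.mem_ofPred_eq]
    _ ≤ exOffsets.card + 1 :=
        (Set.encard_insert_le _ _).trans (by gcongr; exact encard_setOf_sub_mem_le _ _)
    _ = 7 := rfl

theorem exMat_column_eight : {i : ℕ+ | exMat i 8 = true} = ({1, 2, 3, 5, 6, 8, 9} : Finset ℕ+) := by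
  ext i
  simp only [exMat, Set.mem_ofPred_eq, decide_eq_true_eq, Finset.coe_insert,
    Finset.coe_singleton, Set.mem_insert_iff, Set.mem_singleton_iff, ← PNat.coe_inj,
    PNat.val_ofNat]
  omega

theorem exOffsets_sub_covers :
    ∀ d ∈ Finset.Icc 1 7, ∃ y ∈ Finset.range 7, (y : ℤ) ∈ exOffsets ∧ (y : ℤ) - d ∈ exOffsets := by
  decide

theorem exists_exMat_common_column {a b : ℕ+} (hab : (a : ℕ) < b) (hba : (b : ℕ) ≤ a + 7) :
    ∃ k, exMat a k = true ∧ exMat b k = true := by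
  obtain ⟨y, -, hy, hyd⟩ := exOffsets_sub_covers (b - a) (by simp only [Finset.mem_Icc]; omega)
  obtain ⟨k, hk⟩ : ∃ k : ℕ+, (k : ℕ) = a + y := ⟨⟨a + y, by positivity⟩, rfl⟩
  have hk' : (k : ℤ) = a + y := by exact_mod_cast hk
  refine ⟨k, exMat_eq_true_iff.mpr (.inr ?_), exMat_eq_true_iff.mpr (.inr ?_)⟩
  · simpa [hk'] using hy
  · convert hyd using 1
    push_cast [hk', Nat.cast_sub hab.le]
    ring

theorem exists_exMat_common_column_of_ne {a b : ℕ+} (hne : a ≠ b) (hab : (a : ℕ) ≤ b + 7)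
    (hba : (b : ℕ) ≤ a + 7) : ∃ k, exMat a k = true ∧ exMat b k = true := by
  obtain hlt | hgt := lt_or_gt_of_ne (PNat.coe_injective.ne hne)
  · exact exists_exMat_common_column hlt hba
  · exact (exists_exMat_common_column hgt hab).imp fun _ => And.symm

/-- for the matrix `A(i,j) = 1 ⟺ i = 1 ∨ j ∈ {i−1,i,i+2,i+3,i+5,i+6}`:
(a) every column set `ρ_A^{-1}(k) = {i : A(i,k) = 1}` has at most `7` elements and some
column set has exactly `7` elements (so `M_A = 7`); (b) any two distinct elements of
`{2,…,9}` lie in a common column set, and consequently every `A`-orthogonal division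
of the positive integers has at least `8` parts. -/
theorem stmt12 :
    (∀ k : ℕ+, {i : ℕ+ | exMat i k = true}.encard ≤ 7) ∧
    (∃ k : ℕ+, {i : ℕ+ | exMat i k = true}.encard = 7) ∧
    (∀ a b : ℕ+, a ∈ ({2, 3, 4, 5, 6, 7, 8, 9} : Set ℕ+) →
      b ∈ ({2, 3, 4, 5, 6, 7, 8, 9} : Set ℕ+) → a ≠ b →
      ∃ k : ℕ+, exMat a k = true ∧ exMat b k = true) ∧
    (∀ (m : ℕ) (H : Fin m → Set ℕ+), IsOrthDiv exMat m H → 8 ≤ m) := by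
  have hbounds : ∀ a ∈ ({2, 3, 4, 5, 6, 7, 8, 9} : Set ℕ+), 2 ≤ (a : ℕ) ∧ (a : ℕ) ≤ 9 := by
    simp only [Set.mem_insert_iff, Set.mem_singleton_iff]
    rintro a (rfl | rfl | rfl | rfl | rfl | rfl | rfl | rfl) <;> simp
  have hpair : ∀ a b : ℕ+, a ∈ ({2, 3, 4, 5, 6, 7, 8, 9} : Set ℕ+) →
      b ∈ ({2, 3, 4, 5, 6, 7, 8, 9} : Set ℕ+) → a ≠ b →
      ∃ k : ℕ+, exMat a k = true ∧ exMat b k = true := by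
    intro a b ha hb hne
    have := hbounds a ha
    have := hbounds b hb
    exact exists_exMat_common_column_of_ne hne (by omega) (by omega)
  refine ⟨encard_exMat_column_le, ⟨8, ?_⟩, hpair, fun m H hH => ?_⟩
  · rw [exMat_column_eight, Set.encard_coe_eq_coe_finsetCard]
    rfl
  · exact hH.card_le_of_pairwise {2, 3, 4, 5, 6, 7, 8, 9} <| by
      simp only [Finset.coe_insert, Finset.coe_singleton]
      exact fun a ha b hb => hpair a b ha hb
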